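/- Let n ≥ 1 be a natural number, let x : Fin n → ℕ satisfy x i ≥ 1 for all i, let X = ∑ i, x i, and let ε : ℝ satisfy 0 < ε ≤ 1/X. Consider the vertex set V = Fin n ⊕ Fin 2, writing A and B for the two extra vertices, with the symmetric weight function w given by: w(A,B) = w(B,A) = 1; w(A,v_i) = w(v_i,A) = w(B,v_i) = w(v_i,B) = 2·(x i)/X − ε/n for each i; and all other weights 0. Then there exists a subset T of Fin n with 2·∑_{i ∈ T} x i = X if and only if (V, w) admits a valid weighted improper 2-coloring. -/

import Mathlib

open Finset

/-- A `k`-coloring `c` of a weighted digraph `(V, w)` is a valid weighted improper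
coloring if every vertex has weighted indegree less than `1` from same-colored vertices. -/
def ValidWIC {V : Type*} [Fintype V] [DecidableEq V] {k : ℕ} (w : V → V → ℝ)
    (c : V → Fin k) : Prop :=
  ∀ v : V, ∑ u ∈ Finset.univ.filter (fun u => u ≠ v ∧ c u = c v), w u v < 1

/-! The arc of weight `1` between `A = .inr 0` and `B = .inr 1`, together with nonnegativity of all
weights, forces every valid 2-coloring to separate `A` from `B`; each item vertex then sees only
its own weight `aᵢ = 2 xᵢ / X - ε / n`, and a coloring amounts to a split of the items into the
class `T` of `A` and the class `Tᶜ` of `B` with `∑_{T} a < 1` and `∑_{Tᶜ} a < 1`. Because the total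
perturbation is at most `ε ≤ 1 / X`, the inequality `∑_{T} a < 1` is exactly `2 ∑_{T} x ≤ X`,
and the two inequalities for `T` and `Tᶜ` together say `2 ∑_{T} x = X`. -/

theorem ValidWIC.ne_of_one_le {V : Type*} [Fintype V] [DecidableEq V] {k : ℕ}
    {w : V → V → ℝ} {c : V → Fin k} (hc : ValidWIC w c) {u v : V}
    (hw : ∀ u', 0 ≤ w u' v) (huv : u ≠ v) (h : 1 ≤ w u v) : c u ≠ c v := by
  intro hcuv
  have hmem : u ∈ univ.filter (fun u' => u' ≠ v ∧ c u' = c v) := by simp [huv, hcuv]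
  exact (hc v).not_ge (h.trans (single_le_sum (fun u' _ => hw u') hmem))

theorem Fin.eq_iff_ne_of_ne {a b : Fin 2} (h : a ≠ b) (y : Fin 2) : y = b ↔ y ≠ a := by
  omega

section Gadget

variable {ι : Type*} (a : ι → ℝ)

def partitionGadget : ι ⊕ Fin 2 → ι ⊕ Fin 2 → ℝ
  | .inr b, .inr b' => if b = b' then 0 else 1
  | .inr _, .inl i => a i
  | .inl i, .inr _ => a i
  | .inl _, .inl _ => 0

theorem partitionGadget_nonneg (ha : ∀ i, 0 ≤ a i) (u v : ι ⊕ Fin 2) :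
    0 ≤ partitionGadget a u v := by
  rcases u with i | b <;> rcases v with j | b'
  · exact le_rfl
  · exact ha i
  · exact ha j
  · dsimp only [partitionGadget]
    split_ifs <;> norm_num

variable [Fintype ι] [DecidableEq ι] {c : ι ⊕ Fin 2 → Fin 2}

theorem sum_partitionGadget_inl (hc : c (.inr 0) ≠ c (.inr 1)) (i : ι) :
    ∑ u ∈ univ.filter (fun u => u ≠ .inl i ∧ c u = c (.inl i)), partitionGadget a u (.inl i)
      = a i := by
  rw [sum_filter, Fintype.sum_sum_type, Fin.sum_univ_two]
  by_cases h : c (.inl i) = c (.inr 0)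
  · simp [partitionGadget, h, hc.symm]
  · simp [partitionGadget, (Fin.eq_iff_ne_of_ne hc _).2 h, hc]

theorem sum_partitionGadget_inr (b : Fin 2) (hc : c (.inr 0) ≠ c (.inr 1)) :
    ∑ u ∈ univ.filter (fun u => u ≠ .inr b ∧ c u = c (.inr b)), partitionGadget a u (.inr b)
      = ∑ i ∈ univ.filter (fun i => c (.inl i) = c (.inr b)), a i := by
  rw [sum_filter, sum_filter, Fintype.sum_sum_type, Fin.sum_univ_two]
  fin_cases b <;> simp [partitionGadget, hc, hc.symm]

theorem validWIC_partitionGadget_iff (hc : c (.inr 0) ≠ c (.inr 1)) :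
    ValidWIC (partitionGadget a) c ↔ (∀ i, a i < 1) ∧
      ∑ i ∈ univ.filter (fun i => c (.inl i) = c (.inr 0)), a i < 1 ∧
      ∑ i ∈ (univ.filter (fun i => c (.inl i) = c (.inr 0)))ᶜ, a i < 1 := by
  have hcompl : (univ.filter (fun i => c (.inl i) = c (.inr 0)))ᶜ
      = univ.filter (fun i => c (.inl i) = c (.inr 1)) := by
    ext i
    simp [Fin.eq_iff_ne_of_ne hc]
  simp only [ValidWIC, Sum.forall, Fin.forall_fin_two, sum_partitionGadget_inl a hc,
    sum_partitionGadget_inr a _ hc, hcompl]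

theorem exists_validWIC_partitionGadget_iff (ha : ∀ i, 0 ≤ a i) :
    (∃ c : ι ⊕ Fin 2 → Fin 2, ValidWIC (partitionGadget a) c) ↔
      ∃ T : Finset ι, ∑ i ∈ T, a i < 1 ∧ ∑ i ∈ Tᶜ, a i < 1 := by
  constructor
  · rintro ⟨c, hc⟩
    have hAB : c (.inr 0) ≠ c (.inr 1) :=
      ValidWIC.ne_of_one_le hc (fun u => partitionGadget_nonneg a ha u _) (by simp)
        (by simp [partitionGadget])
    exact ⟨_, ((validWIC_partitionGadget_iff a hAB).1 hc).2⟩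
  · rintro ⟨T, hT, hTc⟩
    let c : ι ⊕ Fin 2 → Fin 2 := Sum.elim (fun i => if i ∈ T then 0 else 1) id
    have hAB : c (.inr 0) ≠ c (.inr 1) := by simp [c]
    have hfilter : univ.filter (fun i => c (.inl i) = c (.inr 0)) = T := by
      ext i
      by_cases hi : i ∈ T <;> simp [c, hi]
    have ha_lt : ∀ i, a i < 1 := by
      intro i
      by_cases hi : i ∈ T
      · exact (single_le_sum (fun j _ => ha j) hi).trans_lt hT
      · exact (single_le_sum (fun j _ => ha j) (mem_compl.2 hi)).trans_lt hTc
    exact ⟨c, (validWIC_partitionGadget_iff a hAB).2 ⟨ha_lt, by rwa [hfilter], by rwa [hfilter]⟩⟩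

end Gadget

section Weights

variable {ι : Type*} [Fintype ι]

noncomputable def partitionWeights (x : ι → ℕ) (ε : ℝ) (i : ι) : ℝ :=
  2 * (x i : ℝ) / ((∑ j, x j : ℕ) : ℝ) - ε / (Fintype.card ι : ℝ)

variable {x : ι → ℕ} {ε : ℝ}

theorem partitionWeights_nonneg (hx : ∀ i, 1 ≤ x i) (hε : 0 ≤ ε)
    (hε' : ε ≤ 1 / ((∑ j, x j : ℕ) : ℝ)) (i : ι) : 0 ≤ partitionWeights x ε i := by
  have hcard : (1 : ℝ) ≤ Fintype.card ι := by exact_mod_cast Fintype.card_pos_iff.2 ⟨i⟩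
  have hxi : (1 : ℝ) ≤ 2 * x i := by
    have : (1 : ℝ) ≤ x i := by exact_mod_cast hx i
    linarith
  refine sub_nonneg.2 ?_
  calc ε / (Fintype.card ι : ℝ) ≤ ε := div_le_self hε hcard
    _ ≤ 1 / ((∑ j, x j : ℕ) : ℝ) := hε'
    _ ≤ 2 * (x i : ℝ) / ((∑ j, x j : ℕ) : ℝ) := div_le_div_of_nonneg_right hxi (Nat.cast_nonneg _)

theorem sum_partitionWeights (T : Finset ι) :
    ∑ i ∈ T, partitionWeights x ε i =
      2 * ((∑ i ∈ T, x i : ℕ) : ℝ) / ((∑ j, x j : ℕ) : ℝ) - #T / (Fintype.card ι : ℝ) * ε := by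
  simp only [partitionWeights, sum_sub_distrib, ← sum_div, ← mul_sum, sum_const, nsmul_eq_mul]
  push_cast
  ring

theorem sum_partitionWeights_lt_one_iff (hε : 0 < ε) (hε' : ε ≤ 1 / ((∑ j, x j : ℕ) : ℝ))
    (T : Finset ι) : ∑ i ∈ T, partitionWeights x ε i < 1 ↔ 2 * ∑ i ∈ T, x i ≤ ∑ j, x j := by
  rw [sum_partitionWeights]
  set S := ∑ i ∈ T, x i
  set X := ∑ j, x j
  constructor
  · intro h
    by_contra! hlt
    have hSX : S ≤ X := sum_le_sum_of_subset (subset_univ T)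
    have hX : (0 : ℝ) < X := by exact_mod_cast (show 0 < X by omega)
    have hcard : (#T / (Fintype.card ι : ℝ)) * ε ≤ ε :=
      mul_le_of_le_one_left hε.le <|
        div_le_one_of_le₀ (by exact_mod_cast card_le_univ T) (by positivity)
    have h2S : ((X + 1 : ℕ) : ℝ) / X ≤ 2 * (S : ℝ) / X :=
      div_le_div_of_nonneg_right (by exact_mod_cast hlt) hX.le
    have hX1 : ((X + 1 : ℕ) : ℝ) / X = 1 + 1 / X := by field_simp; push_cast; ring
    -- the perturbation `#T / n * ε ≤ ε ≤ 1 / X` cannot absorb the excess `2 S - X ≥ 1`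
    linarith
  · intro h
    have h2S : 2 * (S : ℝ) / X ≤ 1 := div_le_one_of_le₀ (by exact_mod_cast h) (by positivity)
    rcases T.eq_empty_or_nonempty with rfl | ⟨i, hi⟩
    · simp [S]
    · have : 0 < (#T / (Fintype.card ι : ℝ)) * ε := by
        have := Fintype.card_pos_iff.2 ⟨i⟩
        have := card_pos.2 ⟨i, hi⟩
        positivity
      linarith

end Weights

theorem two_mul_sum_eq_sum_iff {ι : Type*} [Fintype ι] [DecidableEq ι] (x : ι → ℕ)
    (T : Finset ι) :
    2 * ∑ i ∈ T, x i = ∑ i, x i ↔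
      2 * ∑ i ∈ T, x i ≤ ∑ i, x i ∧ 2 * ∑ i ∈ Tᶜ, x i ≤ ∑ i, x i := by
  have := sum_add_sum_compl T x
  omega

theorem partition_iff_weighted_improper_two_coloring
    (n : ℕ) (x : Fin n → ℕ) (hx : ∀ i, 1 ≤ x i)
    (X : ℕ) (hX : X = ∑ i, x i)
    (ε : ℝ) (hε : 0 < ε) (hε' : ε ≤ 1 / (X : ℝ))
    (w : (Fin n ⊕ Fin 2) → (Fin n ⊕ Fin 2) → ℝ)
    (hw : ∀ u v, w u v =
      match u, v with
      | Sum.inr a, Sum.inr b => if a = b then 0 else 1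
      | Sum.inr _, Sum.inl i => 2 * (x i : ℝ) / (X : ℝ) - ε / (n : ℝ)
      | Sum.inl i, Sum.inr _ => 2 * (x i : ℝ) / (X : ℝ) - ε / (n : ℝ)
      | Sum.inl _, Sum.inl _ => 0) :
    (∃ T : Finset (Fin n), 2 * ∑ i ∈ T, x i = X) ↔
      ∃ c : (Fin n ⊕ Fin 2) → Fin 2, ValidWIC w c := by
  subst hX
  have hw' : w = partitionGadget (partitionWeights x ε) := by
    funext u v
    rw [hw]
    cases u <;> cases v <;> simp [partitionGadget, partitionWeights]
  subst hw'
  rw [exists_validWIC_partitionGadget_iff _ (partitionWeights_nonneg hx hε.le hε')]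
  simp only [sum_partitionWeights_lt_one_iff hε hε', two_mul_sum_eq_sum_iff]
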